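/- Let ε ∈ (0,1) and γ ∈ (0,1). Let (a_{ij}) be an m×n matrix with entries in [0,1], let (i_s)_{s≥1}, (j_s)_{s≥1} be action sequences, and let E ⊆ ℕ be a set of exploration steps with infinite complement such that lim_{t→∞} e(t)/t = γ, where e(t) = #(E ∩ {1,…,t}). Suppose the average regret computed over the non-exploration steps satisfies limsup_{k→∞} R_A(s_k)/k ≤ ε, where s_k is the k-th non-exploration step and R_A(t) = max_i Σ_{s≤t, s∉E} a_{i j_s} − Σ_{s≤t, s∉E} a_{i_s j_s}. Then the overall average regret satisfies limsup_{t→∞} r(t) ≤ γ + ε(1 − γ) ≤ γ + ε, where r(t) = (1/t)(max_i Σ_{s≤t} a_{i j_s} − Σ_{s≤t} a_{i_s j_s}). -/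

import Mathlib

open Filter Finset

noncomputable section

/-- Cumulative regret of player 1 over the set `S` of steps:
`max_i Σ_{s∈S} a_{i j_s} − Σ_{s∈S} a_{i_s j_s}`. -/
def cumRegretOn {m n : ℕ} (M : Fin (m+1) → Fin (n+1) → ℝ)
    (iseq : ℕ → Fin (m+1)) (jseq : ℕ → Fin (n+1)) (S : Finset ℕ) : ℝ :=
  (Finset.univ.sup' Finset.univ_nonempty fun i => ∑ s ∈ S, M i (jseq s)) -
    ∑ s ∈ S, M (iseq s) (jseq s)

section Aux

variable {m n : ℕ} {M : Fin (m+1) → Fin (n+1) → ℝ}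
    {iseq : ℕ → Fin (m+1)} {jseq : ℕ → Fin (n+1)}

lemma cumRegretOn_le_card (hM : ∀ i j, M i j ∈ Set.Icc (0:ℝ) 1) (S : Finset ℕ) :
    cumRegretOn M iseq jseq S ≤ S.card := by
  unfold cumRegretOn
  have h1 : (Finset.univ.sup' Finset.univ_nonempty fun i => ∑ s ∈ S, M i (jseq s))
      ≤ (S.card : ℝ) := by
    apply Finset.sup'_le
    intro i _
    calc ∑ s ∈ S, M i (jseq s) ≤ ∑ s ∈ S, (1:ℝ) :=
          Finset.sum_le_sum fun s _ => (hM i (jseq s)).2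
      _ = S.card := by simp
  have h2 : (0:ℝ) ≤ ∑ s ∈ S, M (iseq s) (jseq s) :=
    Finset.sum_nonneg fun s _ => (hM _ _).1
  linarith

lemma neg_card_le_cumRegretOn (hM : ∀ i j, M i j ∈ Set.Icc (0:ℝ) 1) (S : Finset ℕ) :
    -(S.card : ℝ) ≤ cumRegretOn M iseq jseq S := by
  unfold cumRegretOn
  have h1 : (0:ℝ) ≤ (Finset.univ.sup' Finset.univ_nonempty fun i => ∑ s ∈ S, M i (jseq s)) := by
    refine le_trans ?_ (Finset.le_sup' (fun i => ∑ s ∈ S, M i (jseq s)) (Finset.mem_univ (0 : Fin (m+1))))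
    exact Finset.sum_nonneg fun s _ => (hM _ _).1
  have h2 : ∑ s ∈ S, M (iseq s) (jseq s) ≤ (S.card : ℝ) := by
    calc ∑ s ∈ S, M (iseq s) (jseq s) ≤ ∑ s ∈ S, (1:ℝ) :=
          Finset.sum_le_sum fun s _ => (hM _ _).2
      _ = S.card := by simp
  linarith

lemma cumRegretOn_union_le (hM : ∀ i j, M i j ∈ Set.Icc (0:ℝ) 1) (S T : Finset ℕ)
    (hST : Disjoint S T) :
    cumRegretOn M iseq jseq (S ∪ T) ≤ cumRegretOn M iseq jseq S + T.card := by
  unfold cumRegretOn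
  have h1 : (Finset.univ.sup' Finset.univ_nonempty fun i => ∑ s ∈ S ∪ T, M i (jseq s))
      ≤ (Finset.univ.sup' Finset.univ_nonempty fun i => ∑ s ∈ S, M i (jseq s)) + T.card := by
    apply Finset.sup'_le
    intro i _
    rw [Finset.sum_union hST]
    have hA : ∑ s ∈ S, M i (jseq s)
        ≤ Finset.univ.sup' Finset.univ_nonempty fun i => ∑ s ∈ S, M i (jseq s) :=
      Finset.le_sup' (fun i => ∑ s ∈ S, M i (jseq s)) (Finset.mem_univ i)
    have hB : ∑ s ∈ T, M i (jseq s) ≤ (T.card : ℝ) := by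
      calc ∑ s ∈ T, M i (jseq s) ≤ ∑ s ∈ T, (1:ℝ) :=
            Finset.sum_le_sum fun s _ => (hM _ _).2
        _ = T.card := by simp
    linarith
  have h2 : ∑ s ∈ S, M (iseq s) (jseq s) ≤ ∑ s ∈ S ∪ T, M (iseq s) (jseq s) := by
    rw [Finset.sum_union hST]
    have : (0:ℝ) ≤ ∑ s ∈ T, M (iseq s) (jseq s) :=
      Finset.sum_nonneg fun s _ => (hM _ _).1
    linarith
  linarith

end Aux


private lemma div_le_div_of_nonneg_right' {x y t : ℝ} (ht : 0 < t) (h : x ≤ y) :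
    x / t ≤ y / t := by
  exact div_le_div_of_nonneg_right h ht.le

/-- If the exploration steps `E` have asymptotic density `γ` and the average
regret computed over the non-exploration steps (the `k`-th of which is
`Nat.nth (fun s => 1 ≤ s ∧ s ∉ E) (k-1)`) has `limsup ≤ ε`, then the overall average
regret satisfies `limsup r(t) ≤ γ + ε(1 − γ) ≤ γ + ε`. -/
theorem explored_regret_bound (m n : ℕ) (ε γ : ℝ)
    (hε : ε ∈ Set.Ioo (0:ℝ) 1) (hγ : γ ∈ Set.Ioo (0:ℝ) 1)
    (M : Fin (m+1) → Fin (n+1) → ℝ) (hM : ∀ i j, M i j ∈ Set.Icc (0:ℝ) 1)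
    (iseq : ℕ → Fin (m+1)) (jseq : ℕ → Fin (n+1))
    (E : Set ℕ) [DecidablePred (· ∈ E)]
    (hinf : {s : ℕ | 1 ≤ s ∧ s ∉ E}.Infinite)
    (hdens : Filter.Tendsto
      (fun t : ℕ => (((Finset.Icc 1 t).filter (fun s => s ∈ E)).card : ℝ) / t)
      Filter.atTop (nhds γ))
    (hRA : Filter.limsup
      (fun k : ℕ =>
        cumRegretOn M iseq jseq
            ((Finset.Icc 1 (Nat.nth (fun s => 1 ≤ s ∧ s ∉ E) k)).filter (fun s => s ∉ E)) /
          ((k : ℝ) + 1))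
      Filter.atTop ≤ ε) :
    Filter.limsup (fun t : ℕ => cumRegretOn M iseq jseq (Finset.Icc 1 t) / t)
        Filter.atTop ≤ γ + ε * (1 - γ) ∧
      γ + ε * (1 - γ) ≤ γ + ε := by
  obtain ⟨hε0, hε1⟩ := hε
  obtain ⟨hγ0, hγ1⟩ := hγ
  have hsecond : γ + ε * (1 - γ) ≤ γ + ε := by nlinarith
  refine ⟨?_, hsecond⟩
  set p : ℕ → Prop := fun s => 1 ≤ s ∧ s ∉ E with hpdef
  have pinf : (setOf p).Infinite := hinf
  -- counting functions
  set e : ℕ → ℕ := fun t => ((Finset.Icc 1 t).filter (fun s => s ∈ E)).card with hedef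
  set c : ℕ → ℕ := fun t => ((Finset.Icc 1 t).filter (fun s => s ∉ E)).card with hcdef
  have hfilter_eq : ∀ u : ℕ, (Finset.Icc 1 u).filter (fun s => s ∉ E)
      = (Finset.range (u+1)).filter p := by
    intro u
    ext s
    simp only [Finset.mem_filter, Finset.mem_Icc, Finset.mem_range, Nat.lt_succ_iff, hpdef]
    tauto
  have hccount : ∀ t : ℕ, c t = Nat.count p (t+1) := by
    intro t
    rw [hcdef]
    simp only [hfilter_eq t, Nat.count_eq_card_filter_range]
  have hce : ∀ t : ℕ, e t + c t = t := by
    intro t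
    have := Finset.card_filter_add_card_filter_not
      (s := Finset.Icc 1 t) (p := fun s => s ∈ E)
    simpa [hedef, hcdef, Nat.card_Icc] using this
  -- key lemma: the set of played non-exploration steps up to t equals the one up to nth p (c t - 1)
  have hGt : ∀ t : ℕ, 1 ≤ c t →
      (Finset.Icc 1 t).filter (fun s => s ∉ E)
        = (Finset.Icc 1 (Nat.nth p (c t - 1))).filter (fun s => s ∉ E) := by
    intro t hct
    have hut : Nat.nth p (c t - 1) ≤ t := by
      by_contra hcon
      push_neg at hcon
      have h1 : Nat.count p (t+1) ≤ Nat.count p (Nat.nth p (c t - 1)) :=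
        Nat.count_monotone p hcon
      rw [Nat.count_nth_of_infinite pinf] at h1
      rw [← hccount t] at h1
      omega
    rw [hfilter_eq, hfilter_eq]
    ext s
    simp only [Finset.mem_filter, Finset.mem_range, Nat.lt_succ_iff]
    constructor
    · rintro ⟨hst, hps⟩
      refine ⟨?_, hps⟩
      have h1 : Nat.count p (s+1) ≤ Nat.count p (t+1) := Nat.count_monotone p (by omega)
      rw [Nat.count_succ, if_pos hps] at h1
      rw [← hccount t] at h1
      have h2 : Nat.count p s ≤ c t - 1 := by omega
      calc s = Nat.nth p (Nat.count p s) := (Nat.nth_count hps).symm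
        _ ≤ Nat.nth p (c t - 1) := (Nat.nth_le_nth pinf).2 h2
    · rintro ⟨hsu, hps⟩
      exact ⟨le_trans hsu hut, hps⟩
  -- card of played non-exploration steps at nth p k is k+1
  have hcard_nth : ∀ k : ℕ,
      ((Finset.Icc 1 (Nat.nth p k)).filter (fun s => s ∉ E)).card = k + 1 := by
    intro k
    rw [hfilter_eq, ← Nat.count_eq_card_filter_range, Nat.count_nth_succ_of_infinite pinf]
  -- the average regret over non-exploration steps is bounded by 1
  have hg_bdd : IsBoundedUnder (· ≤ ·) atTop
      (fun k : ℕ =>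
        cumRegretOn M iseq jseq
            ((Finset.Icc 1 (Nat.nth p k)).filter (fun s => s ∉ E)) / ((k : ℝ) + 1)) := by
    refine Filter.isBoundedUnder_of ⟨1, fun k : ℕ => ?_⟩
    have h1 : cumRegretOn M iseq jseq ((Finset.Icc 1 (Nat.nth p k)).filter (fun s => s ∉ E))
        ≤ ((k : ℝ) + 1) := by
      have := cumRegretOn_le_card (iseq := iseq) (jseq := jseq) hM
        ((Finset.Icc 1 (Nat.nth p k)).filter (fun s => s ∉ E))
      rwa [hcard_nth k, Nat.cast_add, Nat.cast_one] at this
    have hk1 : (0:ℝ) < (k : ℝ) + 1 := by positivity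
    rw [div_le_one hk1]
    exact h1
  -- coboundedness of the target sequence
  have hcobdd : IsCoboundedUnder (· ≤ ·) atTop
      (fun t : ℕ => cumRegretOn M iseq jseq (Finset.Icc 1 t) / t) := by
    refine Filter.isCoboundedUnder_le_of_eventually_le atTop (x := (-1 : ℝ)) ?_
    filter_upwards [Filter.eventually_ge_atTop 1] with t ht
    have ht0 : (0:ℝ) < t := by exact_mod_cast ht
    have h1 : -(t : ℝ) ≤ cumRegretOn M iseq jseq (Finset.Icc 1 t) := by
      have := neg_card_le_cumRegretOn (iseq := iseq) (jseq := jseq) hM (Finset.Icc 1 t)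
      simpa [Nat.card_Icc] using this
    calc (-1 : ℝ) = -(t:ℝ) / t := by field_simp
      _ ≤ cumRegretOn M iseq jseq (Finset.Icc 1 t) / t :=
          div_le_div_of_nonneg_right' ht0 h1

  -- main argument: by contradiction, the limsup exceeds a := γ + ε(1-γ)
  set a := γ + ε * (1 - γ) with hadef
  by_contra hcon
  push_neg at hcon
  set L := Filter.limsup (fun t : ℕ => cumRegretOn M iseq jseq (Finset.Icc 1 t) / t) atTop
    with hLdef
  set δ' := min ((L - a)/8) 1 with hdp
  have hδ'0 : 0 < δ' := lt_min (by linarith) one_pos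
  have hδ'1 : δ' ≤ 1 := min_le_right _ _
  have hδ'4 : 4 * δ' ≤ (L - a)/2 := by
    have := min_le_left ((L - a)/8) 1
    linarith
  -- eventual regret bound along the non-exploration counter
  have hgev : ∀ᶠ k : ℕ in atTop,
      cumRegretOn M iseq jseq
          ((Finset.Icc 1 (Nat.nth p k)).filter (fun s => s ∉ E)) / ((k : ℝ) + 1)
        < ε + δ' :=
    Filter.eventually_lt_of_limsup_lt (lt_of_le_of_lt hRA (by linarith)) hg_bdd
  obtain ⟨K, hK⟩ := Filter.eventually_atTop.mp hgev
  -- density eventual bound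
  have hdev : ∀ᶠ t : ℕ in atTop, |(e t : ℝ)/(t : ℝ) - γ| < δ' := by
    obtain ⟨N, hN⟩ := Metric.tendsto_atTop.mp hdens δ' hδ'0
    refine Filter.eventually_atTop.mpr ⟨N, fun t ht => ?_⟩
    have := hN t ht
    rwa [Real.dist_eq] at this
  -- the non-exploration count is eventually large
  have hctev : ∀ᶠ t : ℕ in atTop, K + 1 ≤ c t := by
    refine Filter.eventually_atTop.mpr ⟨Nat.nth p K, fun t ht => ?_⟩
    have h1 : Nat.count p (Nat.nth p K + 1) ≤ Nat.count p (t+1) :=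
      Nat.count_monotone p (by omega)
    rw [Nat.count_nth_succ_of_infinite pinf] at h1
    rw [hccount t]
    omega
  have hmain : ∀ᶠ t : ℕ in atTop,
      cumRegretOn M iseq jseq (Finset.Icc 1 t) / (t : ℝ) ≤ a + 4 * δ' := by
    filter_upwards [Filter.eventually_ge_atTop 1, hdev, hctev] with t ht1 hdt hct
    have ht0 : (0:ℝ) < (t : ℝ) := by exact_mod_cast ht1
    set k := c t - 1 with hkdef
    have hct1 : 1 ≤ c t := by omega
    have hksucc : k + 1 = c t := by omega
    have hkcast : ((c t : ℕ) : ℝ) = (k : ℝ) + 1 := by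
      rw [← hksucc]; push_cast; ring
    -- split the regret into non-exploration part plus exploration count
    have hsplit : cumRegretOn M iseq jseq (Finset.Icc 1 t)
        ≤ cumRegretOn M iseq jseq ((Finset.Icc 1 t).filter (fun s => s ∉ E)) + (e t : ℝ) := by
      have hdisj : Disjoint ((Finset.Icc 1 t).filter (fun s => s ∉ E))
          ((Finset.Icc 1 t).filter (fun s => s ∈ E)) := by
        rw [Finset.disjoint_left]
        intro s hs hs'
        simp only [Finset.mem_filter] at hs hs'
        exact hs.2 hs'.2
      have hunion : ((Finset.Icc 1 t).filter (fun s => s ∉ E))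
          ∪ ((Finset.Icc 1 t).filter (fun s => s ∈ E)) = Finset.Icc 1 t := by
        ext s
        simp only [Finset.mem_union, Finset.mem_filter]
        tauto
      have := cumRegretOn_union_le (iseq := iseq) (jseq := jseq) hM
        ((Finset.Icc 1 t).filter (fun s => s ∉ E))
        ((Finset.Icc 1 t).filter (fun s => s ∈ E)) hdisj
      rw [hunion] at this
      exact this
    -- bound the non-exploration regret
    have hreg : cumRegretOn M iseq jseq ((Finset.Icc 1 t).filter (fun s => s ∉ E))
        ≤ (ε + δ') * (c t : ℝ) := by
      rw [hGt t hct1]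
      have hKk : K ≤ k := by omega
      have h1 := hK k hKk
      have hk1 : (0:ℝ) < (k : ℝ) + 1 := by positivity
      have h2 : cumRegretOn M iseq jseq
          ((Finset.Icc 1 (Nat.nth p k)).filter (fun s => s ∉ E))
          < (ε + δ') * ((k : ℝ) + 1) := (div_lt_iff₀ hk1).mp h1
      rw [hkcast]
      exact h2.le
    -- density bounds
    have he1 : (e t : ℝ)/(t : ℝ) ≤ γ + δ' := by
      have := abs_lt.mp hdt
      linarith [this.2]
    have hcet : ((c t : ℕ) : ℝ) = (t : ℝ) - (e t : ℝ) := by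
      have h := hce t
      have h2 : ((e t : ℕ) : ℝ) + ((c t : ℕ) : ℝ) = (t : ℝ) := by exact_mod_cast congrArg (Nat.cast : ℕ → ℝ) h
      linarith
    have hc1 : ((c t : ℕ) : ℝ)/(t : ℝ) ≤ 1 - γ + δ' := by
      rw [hcet, sub_div, div_self (ne_of_gt ht0)]
      have := abs_lt.mp hdt
      linarith [this.1]
    have hcnonneg : (0:ℝ) ≤ ((c t : ℕ) : ℝ) := Nat.cast_nonneg _
    have hεδ : (0:ℝ) < ε + δ' := by linarith
    calc cumRegretOn M iseq jseq (Finset.Icc 1 t) / (t : ℝ)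
        ≤ ((ε + δ') * (c t : ℝ) + (e t : ℝ)) / (t : ℝ) := by
          exact div_le_div_of_nonneg_right' ht0 (by linarith)
      _ = (ε + δ') * (((c t : ℕ) : ℝ)/(t : ℝ)) + ((e t : ℕ) : ℝ)/(t : ℝ) := by
          field_simp
      _ ≤ (ε + δ') * (1 - γ + δ') + (γ + δ') := by
          have := mul_le_mul_of_nonneg_left hc1 hεδ.le
          linarith
      _ ≤ a + 4 * δ' := by
          rw [hadef]
          nlinarith [mul_nonneg hδ'0.le hγ0.le,
            mul_nonneg hδ'0.le (sub_nonneg.mpr hε1.le),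
            mul_nonneg hδ'0.le (sub_nonneg.mpr hδ'1)]
  have hfin : L ≤ a + 4 * δ' := Filter.limsup_le_of_le hcobdd hmain
  linarith
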